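/- arXiv:1812.08846 — 3 statements merged into one kernel-verified Lean document; each statement's English description precedes it below -/
import Mathlib

section
/- Let X be a compact metric space such that for every ε > 0 there exists a continuous map g : X → [0,1] all of whose fibers have diameter less than ε. Then for every ε > 0 there is a finite open cover U₁, …, Uₙ of X by sets of diameter less than ε such that Uᵢ ∩ Uⱼ ≠ ∅ implies |i - j| ≤ 1. -/
/-- If a compact metric space admits, for every `ε > 0`, a continuous
map to `[0,1]` all of whose fibers have diameter `< ε`, then for every `ε > 0`
it has a finite open cover `U₁, …, Uₙ` by sets of diameter `< ε` such that sets
with nonadjacent indices are disjoint. -/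
theorem stmt_2 {X : Type*} [MetricSpace X] [CompactSpace X]
    (h : ∀ ε > (0 : ℝ), ∃ g : X → unitInterval, Continuous g ∧
      ∀ t : unitInterval, Metric.diam (g ⁻¹' {t}) < ε) :
    ∀ ε > (0 : ℝ), ∃ (n : ℕ) (U : Fin n → Set X),
      (∀ i, IsOpen (U i)) ∧ (⋃ i, U i) = Set.univ ∧
      (∀ i, Metric.diam (U i) < ε) ∧
      ∀ i j, (U i ∩ U j).Nonempty → |(i : ℤ) - (j : ℤ)| ≤ 1 := by
  intro ε hε
  obtain ⟨g, hg, hfib⟩ := h (ε/2) (by linarith)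
  -- uniform δ: close images ⇒ close points
  have key : ∃ δ > (0:ℝ), ∀ x y : X, dist (g x) (g y) < δ → dist x y < ε/2 := by
    set C : Set (X × X) := {p | ε/2 ≤ dist p.1 p.2} with hCdef
    have hdc : Continuous fun p : X × X => dist p.1 p.2 := continuous_fst.dist continuous_snd
    have hCc : IsClosed C := isClosed_le continuous_const hdc
    have hCcomp : IsCompact C := hCc.isCompact
    rcases C.eq_empty_or_nonempty with hE | hNE
    · refine ⟨1, one_pos, fun x y _ => ?_⟩
      by_contra hxy
      have hmem : (x, y) ∈ C := not_lt.mp hxy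
      rw [hE] at hmem
      exact hmem
    · have hcont : ContinuousOn (fun p : X × X => dist (g p.1) (g p.2)) C :=
        (continuous_dist.comp ((hg.comp continuous_fst).prodMk
          (hg.comp continuous_snd))).continuousOn
      obtain ⟨p₀, hp₀, hmin⟩ := hCcomp.exists_isMinOn hNE hcont
      have hδpos : 0 < dist (g p₀.1) (g p₀.2) := by
        rcases (dist_nonneg : (0:ℝ) ≤ dist (g p₀.1) (g p₀.2)).lt_or_eq with h1 | h1
        · exact h1
        · exfalso
          have hgeq : g p₀.1 = g p₀.2 := dist_eq_zero.mp h1.symm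
          have hb : Bornology.IsBounded (g ⁻¹' {g p₀.2}) :=
            Metric.isBounded_of_compactSpace
          have hd : dist p₀.1 p₀.2 ≤ Metric.diam (g ⁻¹' {g p₀.2}) :=
            Metric.dist_le_diam_of_mem hb (by simp [hgeq]) (by simp)
          have := hfib (g p₀.2)
          have : dist p₀.1 p₀.2 < ε/2 := lt_of_le_of_lt hd this
          exact absurd hp₀ (by simpa [hCdef] using not_le.mpr this)
      refine ⟨dist (g p₀.1) (g p₀.2), hδpos, fun x y hxy => ?_⟩
      by_contra hcon
      have hmem : (x, y) ∈ C := not_lt.mp hcon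
      exact absurd hxy (not_lt.mpr (hmin hmem))
  obtain ⟨δ, hδ, hkey⟩ := key
  -- choose m with 2/m < δ
  obtain ⟨m, hm⟩ := exists_nat_gt (2/δ)
  have hm0 : 0 < (m:ℝ) := lt_trans (div_pos two_pos hδ) hm
  have hmδ : 2/(m:ℝ) < δ := (div_lt_iff₀ hm0).mpr (by
    rw [div_lt_iff₀ hδ] at hm; linarith)
  refine ⟨m + 1, fun i => g ⁻¹' {t | ((i:ℕ):ℝ)/m - 1/m < (t:ℝ) ∧ (t:ℝ) < ((i:ℕ):ℝ)/m + 1/m},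
    ?_, ?_, ?_, ?_⟩
  · intro i
    exact (((isOpen_lt continuous_const continuous_subtype_val).inter
      (isOpen_lt continuous_subtype_val continuous_const)).preimage hg)
  · ext x
    simp only [Set.mem_iUnion, Set.mem_univ, iff_true]
    set t : ℝ := ((g x : ℝ)) with ht
    have ht0 : 0 ≤ t := (g x).2.1
    have ht1 : t ≤ 1 := (g x).2.2
    have htm : t * m ≤ m := by nlinarith
    set k : ℕ := ⌊t * m⌋.toNat with hk
    have hfl0 : (0:ℤ) ≤ ⌊t * m⌋ := Int.le_floor.mpr (by push_cast; positivity)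
    have hkcast : ((k:ℕ):ℝ) = (⌊t * m⌋ : ℝ) := by
      rw [hk]; exact_mod_cast congrArg (fun z : ℤ => (z:ℝ)) (Int.toNat_of_nonneg hfl0)
    have hkle : (k:ℝ) ≤ t * m := hkcast ▸ Int.floor_le _
    have hklt : t * m < (k:ℝ) + 1 := by rw [hkcast]; exact Int.lt_floor_add_one _
    have hkm : k ≤ m := by
      by_contra hcon
      push_neg at hcon
      have : (m:ℝ) + 1 ≤ (k:ℝ) := by exact_mod_cast hcon
      nlinarith
    refine ⟨⟨k, Nat.lt_succ_of_le hkm⟩, ?_, ?_⟩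
    · show ((k:ℝ))/m - 1/m < t
      rw [show ((k:ℝ))/m - 1/m = ((k:ℝ) - 1)/m by ring, div_lt_iff₀ hm0]
      nlinarith
    · show t < ((k:ℝ))/m + 1/m
      rw [show ((k:ℝ))/m + 1/m = ((k:ℝ) + 1)/m by ring, lt_div_iff₀ hm0]
      nlinarith
  · intro i
    have hle : Metric.diam (g ⁻¹' {t | ((i:ℕ):ℝ)/m - 1/m < (t:ℝ) ∧ (t:ℝ) < ((i:ℕ):ℝ)/m + 1/m})
        ≤ ε/2 := by
      apply Metric.diam_le_of_forall_dist_le (by linarith)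
      intro x hx y hy
      have h2m : 1/(m:ℝ) + 1/m = 2/m := by ring
      have hgd : dist (g x) (g y) < δ := by
        have := hx.1; have := hx.2; have := hy.1; have := hy.2
        rw [Subtype.dist_eq, Real.dist_eq, abs_lt]
        constructor <;> linarith
      exact le_of_lt (hkey x y hgd)
    linarith
  · intro i j ⟨x, hxi, hxj⟩
    have h1 : ((i:ℕ):ℝ)/m - 1/m < ((j:ℕ):ℝ)/m + 1/m := lt_trans hxi.1 hxj.2
    have h2 : ((j:ℕ):ℝ)/m - 1/m < ((i:ℕ):ℝ)/m + 1/m := lt_trans hxj.1 hxi.2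
    have h1' : ((i:ℕ):ℝ) < (j:ℕ) + 2 := by
      rw [div_sub_div_same, ← add_div, div_lt_div_iff₀ hm0 hm0] at h1
      nlinarith
    have h2' : ((j:ℕ):ℝ) < (i:ℕ) + 2 := by
      rw [div_sub_div_same, ← add_div, div_lt_div_iff₀ hm0 hm0] at h2
      nlinarith
    have hi : ((i:ℕ):ℤ) < (j:ℕ) + 2 := by exact_mod_cast h1'
    have hj : ((j:ℕ):ℤ) < (i:ℕ) + 2 := by exact_mod_cast h2'
    rw [abs_le]
    omega
end

section
/- Let Z be a normal topological space and let U ⊆ Z be an open set separating two disjoint closed sets A and B in Z (i.e., A, B ⊆ Z \ U and A and B lie in distinct quasi-components of Z \ U, or more simply every connected subset of Z \ U meeting A misses B). Suppose further Z is a compact metric space. Then there exists a closed set M ⊆ U which also separates A from B in Z. -/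
/-- `S` separates `A` from `B` in `Z`. -/
def Separates {α : Type*} [TopologicalSpace α] (Z S A B : Set α) : Prop :=
  A ⊆ Z \ S ∧ B ⊆ Z \ S ∧
    ∀ T ⊆ Z \ S, IsPreconnected T → (T ∩ A).Nonempty → ¬ (T ∩ B).Nonempty

/-- In a compact metric space `Z`, if an open set `U` separates two
disjoint closed sets `A` and `B`, then some closed set `M ⊆ U` also separates
`A` from `B` (Kuratowski §46.VII.3). -/
theorem stmt_10 {Z : Type*} [MetricSpace Z] [CompactSpace Z]
    (A B U : Set Z) (hA : IsClosed A) (hB : IsClosed B) (hAB : Disjoint A B)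
    (hU : IsOpen U) (hsep : Separates Set.univ U A B) :
    ∃ M : Set Z, M ⊆ U ∧ IsClosed M ∧ Separates Set.univ M A B := by
  obtain ⟨hAU, hBU, hTsep⟩ := hsep
  -- work inside the compact subspace K = Uᶜ
  have hKc : IsClosed (Uᶜ) := hU.isClosed_compl
  haveI : CompactSpace (Uᶜ : Set Z) := isCompact_iff_compactSpace.1 hKc.isCompact
  set K := (Uᶜ : Set Z)
  set A' : Set K := Subtype.val ⁻¹' A with hA'def
  set B' : Set K := Subtype.val ⁻¹' B with hB'def
  have hA'c : IsClosed A' := hA.preimage continuous_subtype_val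
  have hB'c : IsClosed B' := hB.preimage continuous_subtype_val
  -- Step 1: connected components of points of A' miss B'
  have hcc : ∀ a : K, a ∈ A' → connectedComponent a ∩ B' = ∅ := by
    intro a ha
    by_contra hne
    rw [← Ne, ← Set.nonempty_iff_ne_empty] at hne
    refine hTsep (Subtype.val '' connectedComponent a) ?_
      (isPreconnected_connectedComponent.image _ continuous_subtype_val.continuousOn)
      ⟨a, ⟨a, mem_connectedComponent, rfl⟩, ha⟩ ?_
    · rintro x ⟨y, -, rfl⟩
      exact ⟨trivial, y.2⟩
    · obtain ⟨b, hb1, hb2⟩ := hne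
      exact ⟨b, ⟨b, hb1, rfl⟩, hb2⟩
  -- Step 2: for each a ∈ A', a clopen set containing a and disjoint from B'
  have hclop : ∀ a : K, a ∈ A' → ∃ C : Set K, IsClopen C ∧ a ∈ C ∧ C ∩ B' = ∅ := by
    intro a ha
    have h : B' ∩ ⋂ s : { s : Set K // IsClopen s ∧ a ∈ s }, ↑s = ∅ := by
      rw [← connectedComponent_eq_iInter_isClopen a]
      rw [Set.inter_comm]; exact hcc a ha
    obtain ⟨t, ht⟩ := hB'c.isCompact.elim_finite_subfamily_closed
      _ (fun s : { s : Set K // IsClopen s ∧ a ∈ s } => s.2.1.1) h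
    refine ⟨⋂ i ∈ t, (i : Set K), isClopen_biInter_finset fun i _ => i.2.1, ?_, ?_⟩
    · exact Set.mem_iInter₂.2 fun i _ => i.2.2
    · rw [Set.inter_comm]; exact ht
  choose! C hC1 hC2 hC3 using hclop
  -- Step 3: finite subcover of A'
  have hcov : A' ⊆ ⋃ a ∈ A', C a := fun a ha => Set.mem_biUnion ha (hC2 a ha)
  obtain ⟨t, ht⟩ := hA'c.isCompact.elim_finite_subcover_image
    (fun a ha => (hC1 a ha).2) hcov
  obtain ⟨htA, htfin, htcov⟩ := ht
  set F : Set K := ⋃ a ∈ t, C a with hFdef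
  have hFclop : IsClopen F := by
    refine Set.Finite.isClopen_biUnion htfin fun a ha => hC1 a (htA ha)
  have hAF : A' ⊆ F := htcov
  have hFB : F ∩ B' = ∅ := by
    apply Set.eq_empty_of_forall_notMem
    rintro x ⟨hxF, hxB⟩
    obtain ⟨a, ha, hxa⟩ := Set.mem_iUnion₂.1 hxF
    exact Set.eq_empty_iff_forall_notMem.1 (hC3 a (htA ha)) x ⟨hxa, hxB⟩
  -- Step 4: push down to Z
  have hemb : Topology.IsClosedEmbedding ((↑) : K → Z) :=
    Topology.IsClosedEmbedding.subtypeVal hKc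
  set F₀ : Set Z := Subtype.val '' F with hF0
  set G₀ : Set Z := Subtype.val '' Fᶜ with hG0
  have hF₀c : IsClosed F₀ := hemb.isClosedMap _ hFclop.isClosed
  have hG₀c : IsClosed G₀ := hemb.isClosedMap _ hFclop.compl.isClosed
  have hdisj : Disjoint F₀ G₀ := by
    rw [Set.disjoint_left]
    rintro x ⟨y, hy, rfl⟩ ⟨z, hz, hzy⟩
    exact hz (by rwa [Subtype.ext hzy.symm] at hy)
  -- Step 5: normal separation
  obtain ⟨V, W, hVo, hWo, hFV, hGW, hVW⟩ := normal_separation hF₀c hG₀c hdisj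
  refine ⟨(V ∪ W)ᶜ, ?_, (hVo.union hWo).isClosed_compl, ?_, ?_, ?_⟩
  · -- M ⊆ U
    intro x hx
    by_contra hxU
    have hxK : x ∈ K := hxU
    rcases Classical.em ((⟨x, hxK⟩ : K) ∈ F) with h | h
    · exact hx (Or.inl (hFV ⟨⟨x, hxK⟩, h, rfl⟩))
    · exact hx (Or.inr (hGW ⟨⟨x, hxK⟩, h, rfl⟩))
  · -- A ⊆ univ \ M
    intro a ha
    have haK : a ∈ K := fun h => (hAU ha).2 h
    exact ⟨trivial, fun h => h (Or.inl (hFV ⟨⟨a, haK⟩, hAF ha, rfl⟩))⟩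
  · -- B ⊆ univ \ M
    intro b hb
    have hbK : b ∈ K := fun h => (hBU hb).2 h
    have : (⟨b, hbK⟩ : K) ∈ Fᶜ := fun h =>
      Set.eq_empty_iff_forall_notMem.1 hFB _ ⟨h, hb⟩
    exact ⟨trivial, fun h => h (Or.inr (hGW ⟨⟨b, hbK⟩, this, rfl⟩))⟩
  · -- separation property
    intro T hT hTpc ⟨a, haT, haA⟩ ⟨b, hbT, hbB⟩
    have hTVW : T ⊆ V ∪ W := by
      intro x hx
      have := (hT hx).2
      simp only [Set.mem_compl_iff, not_not] at this
      exact this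
    have haV : a ∈ V := by
      have haK : a ∈ K := fun h => (hAU haA).2 h
      exact hFV ⟨⟨a, haK⟩, hAF haA, rfl⟩
    have hTV : T ⊆ V := hTpc.subset_left_of_subset_union hVo hWo hVW hTVW ⟨a, haT, haV⟩
    have hbK : b ∈ K := fun h => (hBU hbB).2 h
    have hbG : (⟨b, hbK⟩ : K) ∈ Fᶜ := fun h =>
      Set.eq_empty_iff_forall_notMem.1 hFB _ ⟨h, hbB⟩
    have hbW : b ∈ W := hGW ⟨⟨b, hbK⟩, hbG, rfl⟩
    exact Set.disjoint_left.1 hVW (hTV hbT) hbW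
end

section
/- Let X be a compact connected metric space that is indecomposable (not the union of two proper subcontinua). Then X has uncountably many composants, and any two distinct composants are disjoint; in particular X contains uncountably many pairwise disjoint connected dense subsets. -/
open Set Topology

/-- The composant of `x` in the space `X`: the union of all proper subcontinua of
`X` containing `x`. -/
def composant {X : Type*} [TopologicalSpace X] (x : X) : Set X :=
  {y : X | ∃ K : Set X, IsCompact K ∧ IsConnected K ∧ K ≠ Set.univ ∧ x ∈ K ∧ y ∈ K}

/-- Boundary bumping: in a compact connected T2 space, the connected component of a
point in a proper closed subset meets the frontier of that subset. -/
lemma bumping {X : Type*} [TopologicalSpace X] [T2Space X] [CompactSpace X]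
    [ConnectedSpace X] {F : Set X}
    (hF : IsClosed F) (hFne : F ≠ Set.univ) {x : X} (hx : x ∈ F) :
    (connectedComponentIn F x ∩ frontier F).Nonempty := by
  by_contra hcon
  rw [Set.not_nonempty_iff_eq_empty] at hcon
  haveI : CompactSpace F := isCompact_iff_compactSpace.mp hF.isCompact
  set x' : F := ⟨x, hx⟩
  have hcc : connectedComponentIn F x = Subtype.val '' connectedComponent x' :=
    connectedComponentIn_eq_image hx
  set S : Set F := Subtype.val ⁻¹' frontier F with hSdef
  have hScl : IsClosed S := isClosed_frontier.preimage continuous_subtype_val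
  have hiInter : S ∩ ⋂ Z : {Z : Set F // IsClopen Z ∧ x' ∈ Z}, (Z : Set F) = ∅ := by
    rw [← connectedComponent_eq_iInter_isClopen x']
    ext z
    simp only [mem_inter_iff, mem_empty_iff_false, iff_false, not_and]
    intro hz1 hz2
    have : (z : X) ∈ connectedComponentIn F x ∩ frontier F :=
      ⟨hcc ▸ ⟨z, hz2, rfl⟩, hz1⟩
    rw [hcon] at this
    exact this
  obtain ⟨u, hu⟩ := hScl.isCompact.elim_finite_subfamily_closed _
    (fun Z => Z.2.1.isClosed) hiInter
  set D : Set F := ⋂ Z ∈ u, (Z : Set F) with hDdef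
  have hDclopen : IsClopen D := isClopen_biInter_finset (fun Z _ => Z.2.1)
  have hxD : x' ∈ D := mem_iInter₂.mpr fun Z _ => Z.2.2
  have hDS : D ∩ S = ∅ := by rw [inter_comm]; exact hu
  set E : Set X := Subtype.val '' D with hEdef
  have hEF : E ⊆ F := by rintro _ ⟨d, _, rfl⟩; exact d.2
  have hEfr : ∀ z ∈ E, z ∉ frontier F := by
    rintro _ ⟨d, hd, rfl⟩ hz
    have : d ∈ D ∩ S := ⟨hd, hz⟩
    rw [hDS] at this
    exact this
  have hEint : E ⊆ interior F := by
    intro z hz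
    have h1 : z ∈ F := hEF hz
    by_contra hzi
    exact hEfr z hz (by rw [hF.frontier_eq]; exact ⟨h1, hzi⟩)
  obtain ⟨O, hO, hOD⟩ := isOpen_induced_iff.mp hDclopen.isOpen
  have hEOF : E = F ∩ O := by rw [hEdef, ← hOD, Subtype.image_preimage_coe]
  have hEopen : IsOpen E := by
    have : E = interior F ∩ O := by
      apply subset_antisymm
      · intro z hz
        exact ⟨hEint hz, (hEOF ▸ hz).2⟩
      · intro z hz
        rw [hEOF]
        exact ⟨interior_subset hz.1, hz.2⟩
    rw [this]
    exact isOpen_interior.inter hO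
  have hEclosed : IsClosed E :=
    ((hDclopen.isClosed.isCompact).image continuous_subtype_val).isClosed
  have hEuniv : E = univ :=
    IsClopen.eq_univ ⟨hEclosed, hEopen⟩ ⟨x, ⟨x', hxD, rfl⟩⟩
  exact hFne (subset_antisymm (subset_univ F) (hEuniv ▸ hEF))

section Indec

variable {X : Type*} [MetricSpace X] [CompactSpace X] [ConnectedSpace X]

/-- Union of two proper subcontinua meeting each other is a proper subcontinuum. -/
lemma union_good
    (hind : ∀ A B : Set X, IsCompact A → IsConnected A → IsCompact B → IsConnected B →
      A ∪ B = Set.univ → A = Set.univ ∨ B = Set.univ)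
    {A B : Set X} (hA : IsCompact A) (hAc : IsConnected A) (hAne : A ≠ Set.univ)
    (hB : IsCompact B) (hBc : IsConnected B) (hBne : B ≠ Set.univ)
    (hmeet : (A ∩ B).Nonempty) :
    IsCompact (A ∪ B) ∧ IsConnected (A ∪ B) ∧ A ∪ B ≠ Set.univ := by
  refine ⟨hA.union hB, IsConnected.union hmeet hAc hBc, ?_⟩
  · intro h
    rcases hind A B hA hAc hB hBc h with h' | h'
    exacts [hAne h', hBne h']


/-- Pieces glued onto `K` along the frontier are connected. -/
lemma conn_piece {K L U V : Set X}
    (hKc : IsConnected K)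
    (hLcl : IsClosed L) (hLne : L ≠ Set.univ) (hfr : frontier L ⊆ K)
    (hU : IsOpen U) (hV : IsOpen V) (hUV : L ⊆ U ∪ V)
    (hdisj : L ∩ (U ∩ V) = ∅) :
    IsPreconnected (K ∪ (L \ V)) := by
  obtain ⟨k, hk⟩ := hKc.nonempty
  have key : ∀ a ∈ L \ V, connectedComponentIn L a ⊆ L \ V ∧
      IsConnected (K ∪ connectedComponentIn L a) := by
    intro a ha
    have haL : a ∈ L := ha.1
    have hCa : IsConnected (connectedComponentIn L a) :=
      isConnected_connectedComponentIn_iff.mpr haL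
    have hCaL : connectedComponentIn L a ⊆ L := connectedComponentIn_subset L a
    have hCaV : connectedComponentIn L a ∩ V = ∅ := by
      by_contra hne
      rw [← Ne, ← nonempty_iff_ne_empty] at hne
      have haU : a ∈ U := (hUV haL).resolve_right ha.2
      obtain ⟨z, hz1, hz2⟩ := hCa.isPreconnected U V hU hV (hCaL.trans hUV)
        ⟨a, mem_connectedComponentIn haL, haU⟩ hne
      have : z ∈ L ∩ (U ∩ V) := ⟨hCaL hz1, hz2⟩
      rw [hdisj] at this
      exact this
    have hsub : connectedComponentIn L a ⊆ L \ V := fun z hz =>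
      ⟨hCaL hz, fun hzV => by
        have : z ∈ connectedComponentIn L a ∩ V := ⟨hz, hzV⟩
        rw [hCaV] at this; exact this⟩
    have hmeet : (K ∩ connectedComponentIn L a).Nonempty := by
      obtain ⟨z, hz1, hz2⟩ := bumping hLcl hLne haL
      exact ⟨z, hfr hz2, hz1⟩
    exact ⟨hsub, IsConnected.union hmeet hKc hCa⟩
  have heq : K ∪ (L \ V) =
      ⋃₀ (insert K {S | ∃ a ∈ L \ V, S = K ∪ connectedComponentIn L a}) := by
    apply subset_antisymm
    · rintro z (hz | hz)
      · exact ⟨K, mem_insert _ _, hz⟩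
      · exact ⟨K ∪ connectedComponentIn L z, mem_insert_of_mem _ ⟨z, hz, rfl⟩,
          Or.inr (mem_connectedComponentIn hz.1)⟩
    · rintro z ⟨S, hS, hzS⟩
      rcases hS with rfl | ⟨a, ha, rfl⟩
      · exact Or.inl hzS
      · rcases hzS with h | h
        · exact Or.inl h
        · exact Or.inr ((key a ha).1 h)
  rw [heq]
  apply isPreconnected_sUnion k
  · rintro S (rfl | ⟨a, ha, rfl⟩)
    exacts [hk, Or.inl hk]
  · rintro S (rfl | ⟨a, ha, rfl⟩)
    exacts [hKc.isPreconnected, (key a ha).2.isPreconnected]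

lemma exists_piece_pt {K U V : Set X}
    (hV : IsOpen V)
    (hdisj : closure Kᶜ ∩ (U ∩ V) = ∅)
    (hVne : (closure Kᶜ ∩ V).Nonempty) :
    ∃ b, b ∈ closure Kᶜ \ U ∧ b ∉ K := by
  by_contra hcon
  push_neg at hcon
  have hKcV : Kᶜ ∩ V = ∅ := by
    ext w
    simp only [mem_inter_iff, mem_empty_iff_false, iff_false, not_and]
    intro hw hwV
    have hwL : w ∈ closure Kᶜ := subset_closure hw
    by_cases hwU : w ∈ U
    · have : w ∈ closure Kᶜ ∩ (U ∩ V) := ⟨hwL, hwU, hwV⟩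
      rw [hdisj] at this; exact this
    · exact hw (hcon w ⟨hwL, hwU⟩)
  obtain ⟨z, hzL, hzV⟩ := hVne
  obtain ⟨w, hw1, hw2⟩ := mem_closure_iff.mp hzL V hV hzV
  have : w ∈ Kᶜ ∩ V := ⟨hw2, hw1⟩
  rw [hKcV] at this
  exact this


set_option maxHeartbeats 1000000 in
/-- In an indecomposable continuum every proper subcontinuum has empty interior. -/
lemma proper_int_empty
    (hind : ∀ A B : Set X, IsCompact A → IsConnected A → IsCompact B → IsConnected B →
      A ∪ B = Set.univ → A = Set.univ ∨ B = Set.univ)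
    {K : Set X} (hK : IsCompact K) (hKc : IsConnected K) (hKne : K ≠ Set.univ) :
    interior K = ∅ := by
  by_contra hint
  obtain ⟨u, hu⟩ := nonempty_iff_ne_empty.mpr hint
  set L := closure Kᶜ with hLdef
  have hKcl : IsClosed K := hK.isClosed
  have hLcl : IsClosed L := isClosed_closure
  obtain ⟨p, hp⟩ : ∃ p, p ∉ K := by
    by_contra h
    push_neg at h
    exact hKne (eq_univ_of_forall h)
  have hpL : p ∈ L := subset_closure hp
  have hLne : L ≠ Set.univ := by
    intro h
    have : u ∈ closure Kᶜ := by rw [← hLdef, h]; trivial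
    rcases mem_closure_iff.mp this (interior K) isOpen_interior hu with ⟨z, hz1, hz2⟩
    exact hz2 (interior_subset hz1)
  have hsub : Kᶜ ⊆ L := subset_closure
  have hfr : frontier L ⊆ K := by
    intro z hz
    by_contra hzK
    have : z ∈ interior L := (hKcl.isOpen_compl.subset_interior_iff.mpr hsub) hzK
    rw [hLcl.frontier_eq] at hz
    exact hz.2 this
  have hcover : K ∪ L = Set.univ := by
    apply eq_univ_of_forall
    intro y
    by_cases hy : y ∈ K
    · exact Or.inl hy
    · exact Or.inr (hsub hy)
  by_cases hLconn : IsPreconnected L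
  · rcases hind K L hK hKc hLcl.isCompact ⟨⟨p, hpL⟩, hLconn⟩ hcover with h | h
    exacts [hKne h, hLne h]
  · rw [IsPreconnected] at hLconn
    push_neg at hLconn
    obtain ⟨U, V, hU, hV, hUV, hU1, hV1, hUV0'⟩ := hLconn
    have hUV0 : L ∩ (U ∩ V) = ∅ := hUV0'
    have hdisj' : L ∩ (V ∩ U) = ∅ := by rw [inter_comm V U]; exact hUV0
    have hUV' : L ⊆ V ∪ U := by rwa [union_comm]
    -- the two pieces
    have hA : IsPreconnected (K ∪ (L \ V)) := conn_piece hKc hLcl hLne hfr hU hV hUV hUV0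
    have hB : IsPreconnected (K ∪ (L \ U)) := conn_piece hKc hLcl hLne hfr hV hU hUV' hdisj'
    obtain ⟨b, hbLU, hbK⟩ := exists_piece_pt hV hUV0 hV1
    obtain ⟨a, haLV, haK⟩ := exists_piece_pt hU hdisj' hU1
    have hAcl : IsClosed (K ∪ (L \ V)) := hKcl.union (hLcl.inter hV.isClosed_compl)
    have hBcl : IsClosed (K ∪ (L \ U)) := hKcl.union (hLcl.inter hU.isClosed_compl)
    have hcover2 : (K ∪ (L \ V)) ∪ (K ∪ (L \ U)) = Set.univ := by
      apply eq_univ_of_forall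
      intro y
      by_cases hy : y ∈ K
      · exact Or.inl (Or.inl hy)
      · have hyL : y ∈ L := hsub hy
        rcases hUV hyL with h | h
        · have : y ∉ V := fun hyV => by
            have : y ∈ L ∩ (U ∩ V) := ⟨hyL, h, hyV⟩
            rw [hUV0] at this; exact this
          exact Or.inl (Or.inr ⟨hyL, this⟩)
        · have : y ∉ U := fun hyU => by
            have : y ∈ L ∩ (U ∩ V) := ⟨hyL, hyU, h⟩
            rw [hUV0] at this; exact this
          exact Or.inr (Or.inr ⟨hyL, this⟩)
    have hAne : K ∪ (L \ V) ≠ Set.univ := by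
      intro h
      have : b ∈ K ∪ (L \ V) := by rw [h]; trivial
      rcases this with h' | h'
      · exact hbK h'
      · rcases hUV h'.1 with h'' | h''
        · exact hbLU.2 h''
        · exact h'.2 h''
    have hBne : K ∪ (L \ U) ≠ Set.univ := by
      intro h
      have : a ∈ K ∪ (L \ U) := by rw [h]; trivial
      rcases this with h' | h'
      · exact haK h'
      · rcases hUV h'.1 with h'' | h''
        · exact h'.2 h''
        · exact haLV.2 h''
    obtain ⟨k, hk⟩ := hKc.nonempty
    rcases hind _ _ hAcl.isCompact ⟨⟨k, Or.inl hk⟩, hA⟩ hBcl.isCompact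
      ⟨⟨k, Or.inl hk⟩, hB⟩ hcover2 with h | h
    exacts [hAne h, hBne h]


lemma composant_dense' [Nontrivial X] (x : X) : Dense (composant x) := by
  rw [dense_iff_inter_open]
  intro U hU hUne
  obtain ⟨p, hp⟩ := hUne
  by_cases hxU : x ∈ U
  · obtain ⟨y, hy⟩ := exists_ne x
    refine ⟨x, hxU, {x}, isCompact_singleton, isConnected_singleton, ?_, rfl, rfl⟩
    intro h
    exact hy (by have : y ∈ ({x} : Set X) := by rw [h]; trivial
                 exact this)
  · obtain ⟨r, hr, hball⟩ := Metric.nhds_basis_closedBall.mem_iff.mp (hU.mem_nhds hp)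
    set A := (Metric.ball p r)ᶜ with hAdef
    have hAcl : IsClosed A := Metric.isOpen_ball.isClosed_compl
    have hxA : x ∈ A := fun h => hxU (hball (Metric.ball_subset_closedBall h))
    have hAne : A ≠ Set.univ := by
      intro h
      have : p ∈ A := by rw [h]; trivial
      exact this (Metric.mem_ball_self hr)
    obtain ⟨z, hzC, hzfr⟩ := bumping hAcl hAne hxA
    have hzU : z ∈ U := by
      apply hball
      apply Metric.sphere_subset_closedBall
      apply Metric.frontier_ball_subset_sphere
      rwa [hAdef, frontier_compl] at hzfr
    refine ⟨z, hzU, closure (connectedComponentIn A x),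
      isClosed_closure.isCompact,
      (isConnected_connectedComponentIn_iff.mpr hxA).closure, ?_,
      subset_closure (mem_connectedComponentIn hxA), subset_closure hzC⟩
    intro h
    have hpc : p ∈ closure (connectedComponentIn A x) := by rw [h]; trivial
    have : p ∈ A := (hAcl.closure_subset_iff.mpr (connectedComponentIn_subset A x)) hpc
    exact this (Metric.mem_ball_self hr)

lemma composant_meagre [Nontrivial X]
    (hind : ∀ A B : Set X, IsCompact A → IsConnected A → IsCompact B → IsConnected B →
      A ∪ B = Set.univ → A = Set.univ ∨ B = Set.univ)
    (x : X) : IsMeagre (composant x) := by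
  obtain ⟨b, hbc, hbne, hb⟩ := TopologicalSpace.exists_countable_basis X
  rw [isMeagre_iff_countable_union_isNowhereDense]
  set SB : Set X → Set X := fun B =>
    closure (⋃₀ {K | IsCompact K ∧ IsPreconnected K ∧ x ∈ K ∧ K ∩ B = ∅}) with hSBdef
  refine ⟨SB '' b, ?_, hbc.image _, ?_⟩
  · rintro _ ⟨B, hBb, rfl⟩
    show interior (closure (SB B)) = ∅
    rw [closure_closure]
    by_cases hS : (⋃₀ {K | IsCompact K ∧ IsPreconnected K ∧ x ∈ K ∧ K ∩ B = ∅}).Nonempty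
    · -- SB B is a proper subcontinuum
      have hxS : x ∈ ⋃₀ {K | IsCompact K ∧ IsPreconnected K ∧ x ∈ K ∧ K ∩ B = ∅} := by
        obtain ⟨z, K, hK, hz⟩ := hS
        exact ⟨K, hK, hK.2.2.1⟩
      have hconn : IsPreconnected (SB B) :=
        (isPreconnected_sUnion x _ (fun K hK => hK.2.2.1) (fun K hK => hK.2.1)).closure
      have hBne' : B.Nonempty := by
        rcases eq_empty_or_nonempty B with h | h
        · exact absurd (h ▸ hBb) hbne
        · exact h
      obtain ⟨q, hq⟩ := hBne'
      have hScomp : IsClosed (SB B) := isClosed_closure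
      have hSsub : SB B ⊆ Bᶜ := by
        apply closure_minimal _ (hb.isOpen hBb).isClosed_compl
        rintro z ⟨K, hK, hzK⟩
        intro hzB
        have : z ∈ K ∩ B := ⟨hzK, hzB⟩
        rw [hK.2.2.2] at this
        exact this
      have hSne : SB B ≠ Set.univ := by
        intro h
        have : q ∈ SB B := by rw [h]; trivial
        exact hSsub this hq
      exact proper_int_empty hind hScomp.isCompact ⟨⟨x, subset_closure hxS⟩, hconn⟩ hSne
    · rw [Set.not_nonempty_iff_eq_empty] at hS
      rw [hS, closure_empty, interior_empty]
  · rintro y ⟨K, hKcomp, hKc, hKne, hxK, hyK⟩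
    obtain ⟨p, hp⟩ : ∃ p, p ∉ K := by
      by_contra h
      push_neg at h
      exact hKne (eq_univ_of_forall h)
    obtain ⟨B, hBb, hpB, hBsub⟩ := hb.exists_subset_of_mem_open hp hKcomp.isClosed.isOpen_compl
    refine ⟨SB B, ⟨B, hBb, rfl⟩, subset_closure ⟨K, ⟨hKcomp, hKc.isPreconnected, hxK, ?_⟩, hyK⟩⟩
    ext w
    simp only [mem_inter_iff, mem_empty_iff_false, iff_false, not_and]
    intro hwK hwB
    exact hBsub hwB hwK

end Indec

/-- In a nondegenerate indecomposable continuum, distinct composants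
are disjoint, every composant is dense, and there are uncountably many
composants (hence uncountably many pairwise disjoint connected dense subsets). -/
theorem stmt_13 {X : Type*} [MetricSpace X] [CompactSpace X] [ConnectedSpace X]
    [Nontrivial X]
    (hind : ∀ A B : Set X, IsCompact A → IsConnected A → IsCompact B → IsConnected B →
      A ∪ B = Set.univ → A = Set.univ ∨ B = Set.univ) :
    (∀ x y : X, composant x ≠ composant y → composant x ∩ composant y = ∅) ∧
    (∀ x : X, Dense (composant x)) ∧
    ¬ (Set.range (composant : X → Set X)).Countable := by
  have hsingle : ∀ y : X, ({y} : Set X) ≠ Set.univ := by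
    intro y h
    obtain ⟨y', hy'⟩ := exists_ne y
    exact hy' (by have : y' ∈ ({y} : Set X) := by rw [h]; trivial
                  exact this)
  have hmem : ∀ y : X, y ∈ composant y := fun y =>
    ⟨{y}, isCompact_singleton, isConnected_singleton, hsingle y, rfl, rfl⟩
  have hhelp : ∀ x y z : X, z ∈ composant x → z ∈ composant y →
      composant x ⊆ composant y := by
    rintro x y z ⟨K1, hK1, hK1c, hK1ne, hxK1, hzK1⟩ ⟨K2, hK2, hK2c, hK2ne, hyK2, hzK2⟩
      a ⟨K, hKcomp, hKc, hKne, hxK, haK⟩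
    obtain ⟨hM1, hM1c, hM1ne⟩ := union_good hind hKcomp hKc hKne hK1 hK1c hK1ne ⟨x, hxK, hxK1⟩
    obtain ⟨hM2, hM2c, hM2ne⟩ := union_good hind hM1 hM1c hM1ne hK2 hK2c hK2ne
      ⟨z, Or.inr hzK1, hzK2⟩
    exact ⟨(K ∪ K1) ∪ K2, hM2, hM2c, hM2ne, Or.inr hyK2, Or.inl (Or.inl haK)⟩
  refine ⟨?_, composant_dense', ?_⟩
  · intro x y hne
    by_contra h
    obtain ⟨z, hz1, hz2⟩ := Set.nonempty_iff_ne_empty.mpr h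
    exact hne (subset_antisymm (hhelp x y z hz1 hz2) (hhelp y x z hz2 hz1))
  · intro hcount
    have hXne : Nonempty X := inferInstance
    obtain ⟨x0⟩ := hXne
    obtain ⟨f, hf⟩ := hcount.exists_eq_range ⟨_, Set.mem_range_self x0⟩
    have hcov : (Set.univ : Set X) ⊆ ⋃ n, f n := by
      intro y _
      have : composant y ∈ Set.range f := hf ▸ Set.mem_range_self y
      obtain ⟨n, hn⟩ := this
      exact Set.mem_iUnion.mpr ⟨n, hn ▸ hmem y⟩
    have hmeag : IsMeagre (⋃ n, f n) := by
      apply isMeagre_iUnion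
      intro n
      have : f n ∈ Set.range (composant : X → Set X) := hf ▸ Set.mem_range_self n
      obtain ⟨w, hw⟩ := this
      exact hw ▸ composant_meagre hind w
    have huniv : IsMeagre (Set.univ : Set X) := hmeag.mono hcov
    rw [IsMeagre, Set.compl_univ] at huniv
    have hdense : Dense (∅ : Set X) := dense_of_mem_residual huniv
    obtain ⟨w, hw⟩ := hdense.nonempty
    exact hw
end
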